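/- arXiv:1509.00632 — 6 statements merged into one kernel-verified Lean document; each statement's English description precedes it below -/
import Mathlib

section
/- Let C_V, C_W be metric spaces, E > 0, p_V ∈ C_V, p_W ∈ C_W. Suppose x, y, z are objects with projections to C_V and C_W such that each of x, y, z satisfies min{ d_W(π_W(·), p_W), d_V(π_V(·), p_V) } ≤ E, and suppose d_V(π_V(x), π_V(y)) > 10E, d_W(π_W(x), π_W(y)) > 10E, d_V(π_V(x), p_V) ≤ E, and d_W(π_W(y), p_W) ≤ E. Then there exists U ∈ {V, W} such that min{ d_U(π_U(z), π_U(x)), d_U(π_U(z), π_U(y)) } ≤ 10E. -/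
theorem dist_le_two_mul_of_dist_le_of_dist_le {α : Type*} [PseudoMetricSpace α] {a b p : α}
    {E : ℝ} (ha : dist a p ≤ E) (hb : dist b p ≤ E) : dist a b ≤ 2 * E := by
  linarith [dist_triangle_right a b p]

theorem close_to_one_of_the_pair_general
    (V W : Type) [MetricSpace V] [MetricSpace W]
    (E : ℝ) (pV : V) (pW : W)
    (πVx πVy πVz : V) (πWx πWy πWz : W)
    (hconsz : min (dist πWz pW) (dist πVz pV) ≤ E)
    (hxV : dist πVx pV ≤ E)
    (hyW : dist πWy pW ≤ E) :
    min (dist πVz πVx) (dist πVz πVy) ≤ 10 * E ∨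
    min (dist πWz πWx) (dist πWz πWy) ≤ 10 * E := by
  have hE : 0 ≤ E := dist_nonneg.trans hxV
  rcases min_le_iff.mp hconsz with hzW | hzV
  · refine .inr <| (min_le_right _ _).trans ?_
    linarith [dist_le_two_mul_of_dist_le_of_dist_le hzW hyW]
  · refine .inl <| (min_le_left _ _).trans ?_
    linarith [dist_le_two_mul_of_dist_le_of_dist_le hzV hxV]

/-- Abstract form of the corollary: for transverse domains `V, W` on which `x, y` both
have large projection distance, any third point `z` is `10E`-close to one of `x, y`
in `C V` or in `C W`.  Here `pV = ρ^W_V` and `pW = ρ^V_W`. -/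
theorem close_to_one_of_the_pair
    (V W : Type) [MetricSpace V] [MetricSpace W]
    (E : ℝ) (hE : 0 < E) (pV : V) (pW : W)
    (πVx πVy πVz : V) (πWx πWy πWz : W)
    (hconsx : min (dist πWx pW) (dist πVx pV) ≤ E)
    (hconsy : min (dist πWy pW) (dist πVy pV) ≤ E)
    (hconsz : min (dist πWz pW) (dist πVz pV) ≤ E)
    (hV : 10 * E < dist πVx πVy)
    (hW : 10 * E < dist πWx πWy)
    (hxV : dist πVx pV ≤ E)
    (hyW : dist πWy pW ≤ E) :
    min (dist πVz πVx) (dist πVz πVy) ≤ 10 * E ∨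
    min (dist πWz πWx) (dist πWz πWy) ≤ 10 * E :=
  close_to_one_of_the_pair_general V W E pV pW πVx πVy πVz πWx πWy πWz hconsz hxV hyW
end

section
/- Let (S, ⊑) be a partially ordered set with a symmetric, irreflexive relation ⊥ such that no two ⊥-related elements are ⊑-comparable, and such that whenever V ⊑ W and W ⊥ U, one has V ⊥ U. Assume the 'container axiom': for every T ∈ S and every U ⊑ T such that some V ⊑ T satisfies V ⊥ U, there exists W ∈ S with W ⊑ T, W ≠ T, such that every V with V ⊑ T and V ⊥ U satisfies V ⊑ W. Assume S has a ⊑-maximum element and that every chain in (S, ⊑) has cardinality at most n. Then every subset of S consisting of pairwise ⊥-related elements has cardinality at most n. -/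
/-!
Below a top element `T`, take one member `U` of a pairwise-orthogonal family. The other members
are orthogonal to `U` and nested in `T`, so they all lie in a container `W < T`. Recursing inside
`W` produces a strictly descending chain with one element per member of the family, and the
bound on chains then bounds the family.
-/

section Containers

variable {S : Type*} [PartialOrder S]

/-- The container axiom of hierarchically hyperbolic spaces. -/
def HasOrthogonalContainers (perp : S → S → Prop) : Prop :=
  ∀ T U : S, U ≤ T → (∃ V, V ≤ T ∧ perp V U) →
    ∃ W, W ≤ T ∧ W ≠ T ∧ ∀ V, V ≤ T → perp V U → V ≤ W

lemma IsChain.insert_of_forall_le {C : Set S} (hC : IsChain (· ≤ ·) C) {T : S}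
    (hCT : ∀ c ∈ C, c ≤ T) : IsChain (· ≤ ·) (insert T C) :=
  hC.insert fun c hc _ => .inr (hCT c hc)

variable {perp : S → S → Prop}

lemma HasOrthogonalContainers.exists_lt_forall_le (h : HasOrthogonalContainers perp)
    {U : S} {A : Finset S} (hA : A.Nonempty) (hAU : ∀ a ∈ A, perp a U) {T : S}
    (hUT : U ≤ T) (hAT : ∀ a ∈ A, a ≤ T) : ∃ W < T, ∀ a ∈ A, a ≤ W := by
  obtain ⟨V, hV⟩ := hA
  obtain ⟨W, hWT, hWne, hW⟩ := h T U hUT ⟨V, hAT V hV, hAU V hV⟩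
  exact ⟨W, lt_of_le_of_ne hWT hWne, fun a ha => hW a (hAT a ha) (hAU a ha)⟩

lemma HasOrthogonalContainers.exists_chain_card_eq (h : HasOrthogonalContainers perp)
    {A : Finset S} (hA : (A : Set S).Pairwise perp) {T : S} (hAT : ∀ a ∈ A, a ≤ T) :
    ∃ C : Finset S, IsChain (· ≤ ·) (C : Set S) ∧ C.card = A.card ∧ ∀ c ∈ C, c ≤ T := by
  classical
  induction A using Finset.induction_on generalizing T with
  | empty => exact ⟨∅, by simp⟩
  | insert U A hUA ih =>
    rcases A.eq_empty_or_nonempty with rfl | hAne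
    · exact ⟨{T}, by simp⟩
    have hAU : ∀ a ∈ A, perp a U := fun a ha =>
      hA (by simp [ha]) (by simp) (ne_of_mem_of_not_mem ha hUA)
    obtain ⟨W, hWT, hAW⟩ := h.exists_lt_forall_le hAne hAU (hAT U (by simp))
      fun a ha => hAT a (by simp [ha])
    obtain ⟨C, hC, hCcard, hCW⟩ := ih (hA.mono (by simp)) hAW
    have hCT : ∀ c ∈ C, c < T := fun c hc => (hCW c hc).trans_lt hWT
    refine ⟨insert T C, ?_, ?_, ?_⟩
    · simpa using hC.insert_of_forall_le fun c hc => (hCT c hc).le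
    · rw [Finset.card_insert_of_notMem fun hT => (hCT T hT).false,
        Finset.card_insert_of_notMem hUA, hCcard]
    · simpa using fun c hc => (hCT c hc).le

end Containers

theorem pairwise_orthogonal_card_le_general
    (n : ℕ) (S : Type) [PartialOrder S]
    (perp : S → S → Prop)
    (hcontainer : ∀ T U : S, U ≤ T → (∃ V, V ≤ T ∧ perp V U) →
      ∃ W, W ≤ T ∧ W ≠ T ∧ ∀ V, V ≤ T → perp V U → V ≤ W)
    (hmax : ∃ m : S, ∀ s : S, s ≤ m)
    (hchain : ∀ A : Finset S, IsChain (· ≤ ·) (A : Set S) → A.card ≤ n) :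
    ∀ A : Finset S, (A : Set S).Pairwise perp → A.card ≤ n := by
  intro A hA
  obtain ⟨m, hm⟩ := hmax
  obtain ⟨C, hC, hCcard, -⟩ :=
    HasOrthogonalContainers.exists_chain_card_eq hcontainer hA fun a _ => hm a
  exact hCcard ▸ hchain C hC

/-- "Finite dimension" lemma for hierarchically hyperbolic spaces: the nesting and
orthogonality axioms (with containers for orthogonal complements) force
pairwise-orthogonal families to have cardinality at most the bound `n` on chains. -/
theorem pairwise_orthogonal_card_le
    (n : ℕ) (S : Type) [PartialOrder S]
    (perp : S → S → Prop)
    (hsymm : ∀ a b, perp a b → perp b a)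
    (hirr : ∀ a, ¬ perp a a)
    (hnotcomp : ∀ a b, perp a b → ¬ (a ≤ b ∨ b ≤ a))
    (hinherit : ∀ V W U, V ≤ W → perp W U → perp V U)
    (hcontainer : ∀ T U : S, U ≤ T → (∃ V, V ≤ T ∧ perp V U) →
      ∃ W, W ≤ T ∧ W ≠ T ∧ ∀ V, V ≤ T → perp V U → V ≤ W)
    (hmax : ∃ m : S, ∀ s : S, s ≤ m)
    (hchain : ∀ A : Finset S, IsChain (· ≤ ·) (A : Set S) → A.card ≤ n) :
    ∀ A : Finset S, (A : Set S).Pairwise perp → A.card ≤ n :=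
  pairwise_orthogonal_card_le_general n S perp hcontainer hmax hchain
end

section
/- Let n ∈ ℕ, let S be a (possibly infinite) index set, let L, s > 0 and M ≥ 2L + s. For each W ∈ S let φ_W : {0, 1, ..., n} → ℝ satisfy φ_W(0) = 0, φ_W(i) ≥ 0 for all i, and L-monotonicity: φ_W(i) ≤ φ_W(j) + L whenever i ≤ j. Suppose that for each j with 0 ≤ j < n there exists W_j ∈ S with φ_{W_j}(j+1) ≥ φ_{W_j}(j) + M. Then Σ_{W ∈ S} [φ_W(n)]_s ≥ n · s, where [t]_s = t if t ≥ s and [t]_s = 0 otherwise (the sum is over the finitely many W with [φ_W(n)]_s ≠ 0, namely those W = W_j for some j). -/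
/-!
Fix a coordinate `W` and let `k` be the number of steps `j < n` with `W_j = W`. The running
maximum of `φ_W` grows by at least `M - L` at each of these steps (a jump of `M` from a value at
most `L` below the maximum) and never decreases, while `φ_W(n)` is at most `L` below the running
maximum. Hence `φ_W(n) ≥ k (M - L) - L ≥ k s`, which also exceeds the threshold `s` when
`k ≥ 1`. Summing over the coordinates that occur, the counts `k` add up to `n`.
-/

open Finset

section Jumps

variable {f : ℕ → ℝ} {L M : ℝ} {n : ℕ} (p : ℕ → Prop) [DecidablePred p]

/-- The witness `i` plays the role of the running maximum of `f` on `[0, m]`. -/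
theorem exists_le_add_card_jumps_mul
    (hmono : ∀ i j, i ≤ j → j ≤ n → f i ≤ f j + L)
    (hjump : ∀ j < n, p j → f j + M ≤ f (j + 1)) :
    ∀ m ≤ n, ∃ i ≤ m, f 0 + #{j ∈ range m | p j} * (M - L) ≤ f i := by
  intro m
  induction m with
  | zero => exact fun _ => ⟨0, le_rfl, by simp⟩
  | succ m ih =>
    intro hm
    obtain ⟨i, him, hi⟩ := ih (by omega)
    rw [range_add_one, filter_insert]
    by_cases hp : p m
    · refine ⟨m + 1, le_rfl, ?_⟩
      rw [if_pos hp, card_insert_of_notMem (by simp)]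
      have hdrop := hmono i m him (by omega)
      have hstep := hjump m (by omega) hp
      push_cast
      linarith
    · exact ⟨i, by omega, by rwa [if_neg hp]⟩

theorem add_card_jumps_mul_sub_le
    (hmono : ∀ i j, i ≤ j → j ≤ n → f i ≤ f j + L)
    (hjump : ∀ j < n, p j → f j + M ≤ f (j + 1)) :
    f 0 + #{j ∈ range n | p j} * (M - L) - L ≤ f n := by
  obtain ⟨i, hin, hi⟩ := exists_le_add_card_jumps_mul p hmono hjump n le_rfl
  linarith [hmono i n hin le_rfl]

end Jumps

theorem monotone_jumps_lower_bound_thresholded_sum_general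
    (n : ℕ) (S : Type) [DecidableEq S] (L s M : ℝ)
    (hL : 0 < L) (hs : 0 < s) (hM : 2 * L + s ≤ M)
    (φ : S → ℕ → ℝ)
    (hnonneg : ∀ W, ∀ i ≤ n, 0 ≤ φ W i)
    (hmono : ∀ W, ∀ i j : ℕ, i ≤ j → j ≤ n → φ W i ≤ φ W j + L)
    (Wj : ℕ → S)
    (hjump : ∀ j < n, φ (Wj j) j + M ≤ φ (Wj j) (j + 1)) :
    (n : ℝ) * s ≤
      ∑ W ∈ Finset.image Wj (Finset.range n), (if s ≤ φ W n then φ W n else 0) := by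
  have hcount : (n : ℝ) = ∑ W ∈ image Wj (range n), (#{j ∈ range n | Wj j = W} : ℝ) := by
    exact_mod_cast (card_range n).symm.trans (card_eq_sum_card_image Wj (range n))
  rw [hcount, sum_mul]
  refine sum_le_sum fun W hW => ?_
  set k : ℕ := #{j ∈ range n | Wj j = W}
  have hk : (1 : ℝ) ≤ k := by
    obtain ⟨j, hj, hjW⟩ := mem_image.mp hW
    exact_mod_cast card_pos.mpr ⟨j, mem_filter.mpr ⟨hj, hjW⟩⟩
  have hφ : φ W 0 + k * (M - L) - L ≤ φ W n :=
    add_card_jumps_mul_sub_le (fun j => Wj j = W) (hmono W)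
      fun j hj hjW => hjW ▸ hjump j hj
  have hks : k * s ≤ φ W n := by
    nlinarith [hnonneg W 0 (Nat.zero_le n)]
  rw [if_pos (by nlinarith)]
  exact hks

/-- Upper-bound half of the distance formula, abstracted: along an `L`-monotone discrete
path of length `n` in which each step makes a jump of at least `M ≥ 2L + s` in some
coordinate `W_j`, the sum of the `s`-thresholded final values is at least `n · s`. -/
theorem monotone_jumps_lower_bound_thresholded_sum
    (n : ℕ) (S : Type) [DecidableEq S] (L s M : ℝ)
    (hL : 0 < L) (hs : 0 < s) (hM : 2 * L + s ≤ M)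
    (φ : S → ℕ → ℝ)
    (hzero : ∀ W, φ W 0 = 0)
    (hnonneg : ∀ W, ∀ i ≤ n, 0 ≤ φ W i)
    (hmono : ∀ W, ∀ i j : ℕ, i ≤ j → j ≤ n → φ W i ≤ φ W j + L)
    (Wj : ℕ → S)
    (hjump : ∀ j < n, φ (Wj j) j + M ≤ φ (Wj j) (j + 1)) :
    (n : ℝ) * s ≤
      ∑ W ∈ Finset.image Wj (Finset.range n), (if s ≤ φ W n then φ W n else 0) :=
  monotone_jumps_lower_bound_thresholded_sum_general n S L s M hL hs hM φ hnonneg hmono Wj hjump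
end

section
/- Let κ ≥ 1 and E with 0 < E ≤ κ. Let S be a set of 'domains'; for each U ∈ S let C_U be a metric space with basepoints b_U ∈ C_U and x_U ∈ C_U (the projections of a tuple b and a point x), and for each ordered pair of distinct U, V ∈ S let ρ^V_U ∈ C_U be a point. Assume: (i) for all distinct U, V: min{ d_U(x_U, ρ^V_U), d_V(x_V, ρ^U_V) } ≤ E (consistency of x); and (ii) for all U ∈ S: d_U(x_U, b_U) > 100κ (relevance). Define U ⪯ V iff U = V or d_U(ρ^V_U, b_U) ≤ κ. Then ⪯ is antisymmetric: if U ≠ V and U ⪯ V, then not V ⪯ U. -/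
theorem not_hundred_mul_lt_dist_of_dist_le {M : Type*} [PseudoMetricSpace M] {x r b : M}
    {E κ : ℝ} (hEκ : E ≤ κ) (hxr : dist x r ≤ E) (hrb : dist r b ≤ κ) :
    ¬ 100 * κ < dist x b := by
  -- `0 ≤ dist x r ≤ E ≤ κ`, so `dist x b ≤ E + κ ≤ 2κ ≤ 100κ`.
  intro hfar
  linarith [dist_triangle x r b, dist_nonneg (x := x) (y := r)]

theorem relevant_order_antisymmetric_general
    (S : Type) (C : S → Type) [∀ U, MetricSpace (C U)]
    (κ E : ℝ) (hEκ : E ≤ κ)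
    (b x : ∀ U : S, C U)
    (ρ : ∀ U V : S, C U)
    (hcons : ∀ U V : S, U ≠ V →
      min (dist (x U) (ρ U V)) (dist (x V) (ρ V U)) ≤ E)
    (hrel : ∀ U : S, 100 * κ < dist (x U) (b U)) :
    ∀ U V : S, U ≠ V → dist (ρ U V) (b U) ≤ κ → ¬ (dist (ρ V U) (b V) ≤ κ) := by
  intro U V hUV hU hV
  rcases min_le_iff.mp (hcons U V hUV) with hxU | hxV
  · exact not_hundred_mul_lt_dist_of_dist_le hEκ hxU hU (hrel U)
  · exact not_hundred_mul_lt_dist_of_dist_le hEκ hxV hV (hrel V)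

/-- Antisymmetry of the partial order on maximal relevant domains: `ρ U V ∈ C U` plays
the role of `ρ^V_U`; `x` is an `E`-consistent tuple and `b` is `100κ`-far from `x`
in every coordinate.  Define `U ⪯ V` iff `U = V` or `d_U(ρ^V_U, b_U) ≤ κ`; then
`U ≠ V` and `U ⪯ V` imply `¬ (V ⪯ U)`. -/
theorem relevant_order_antisymmetric
    (S : Type) (C : S → Type) [∀ U, MetricSpace (C U)]
    (κ E : ℝ) (hκ : 1 ≤ κ) (hE : 0 < E) (hEκ : E ≤ κ)
    (b x : ∀ U : S, C U)
    (ρ : ∀ U V : S, C U)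
    (hcons : ∀ U V : S, U ≠ V →
      min (dist (x U) (ρ U V)) (dist (x V) (ρ V U)) ≤ E)
    (hrel : ∀ U : S, 100 * κ < dist (x U) (b U)) :
    ∀ U V : S, U ≠ V → dist (ρ U V) (b U) ≤ κ → ¬ (dist (ρ V U) (b V) ≤ κ) :=
  relevant_order_antisymmetric_general S C κ E hEκ b x ρ hcons hrel
end

section
/- Let X be a metric space, x, y ∈ X, K > 0 and r ≥ 0. Suppose α : {0, 1, ..., n} → X is a K-discrete path from x to y, i.e., α(0) = x, α(n) = y, and d(α(i), α(i+1)) ≤ K for all i < n. Then there exists m ≤ n and a strictly increasing map σ : {0, ..., m} → {0, ..., n} with σ(0) = 0, σ(m) = n, such that the path β = α ∘ σ satisfies: d(β(i), β(i+1)) ∈ [r, r + K] for all 0 ≤ i < m − 1, and d(β(m−1), β(m)) ≤ r + K. -/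
/-!
Sample greedily: after `α 0`, take the first index `t` with `r ≤ dist (α 0) (α t)`, or `n`
if there is none. The predecessor of `t` is within `r` of `α 0` and one `K`-step away from
`α t`, so `dist (α 0) (α t) ≤ r + K`; then continue from `α t` on the shorter tail.
-/

/-- `α ∘ σ` on `0, …, m` is an `(r, K)`-proper path from `α 0` to `α n`. -/
structure IsProperSampling {X : Type*} [PseudoMetricSpace X] (r K : ℝ) (α : ℕ → X)
    (n m : ℕ) (σ : ℕ → ℕ) : Prop where
  map_zero : σ 0 = 0
  map_last : σ m = n
  map_lt_map : ∀ i j, i < j → j ≤ m → σ i < σ j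
  step : ∀ i, i + 1 < m →
    r ≤ dist (α (σ i)) (α (σ (i + 1))) ∧ dist (α (σ i)) (α (σ (i + 1))) ≤ r + K
  last_step : 1 ≤ m → dist (α (σ (m - 1))) (α (σ m)) ≤ r + K

def consSampling (t : ℕ) (σ : ℕ → ℕ) : ℕ → ℕ
  | 0 => 0
  | k + 1 => t + σ k

namespace IsProperSampling

variable {X : Type*} [PseudoMetricSpace X] {r K : ℝ} {α : ℕ → X} {n m t : ℕ} {σ : ℕ → ℕ}

theorem zero : IsProperSampling r K α 0 0 id where
  map_zero := rfl
  map_last := rfl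
  map_lt_map _ _ := by omega
  step _ := by omega
  last_step := by omega

theorem pos_of_pos (h : IsProperSampling r K α n m σ) (hm : 0 < m) : 0 < n := by
  simpa [h.map_zero, h.map_last] using h.map_lt_map 0 m hm le_rfl

theorem cons (h : IsProperSampling r K (fun i => α (t + i)) (n - t) m σ)
    (ht : 0 < t) (htn : t ≤ n) (hupper : dist (α 0) (α t) ≤ r + K)
    (hlower : 0 < m → r ≤ dist (α 0) (α t)) :
    IsProperSampling r K α n (m + 1) (consSampling t σ) where
  map_zero := rfl
  map_last := by simp only [consSampling, h.map_last]; omega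
  map_lt_map i j hij hj := by
    cases j with
    | zero => omega
    | succ j =>
      cases i with
      | zero => simp only [consSampling]; omega
      | succ i => simpa [consSampling] using h.map_lt_map i j (by omega) (by omega)
  step i hi := by
    cases i with
    | zero => simpa [consSampling, h.map_zero] using ⟨hlower (by omega), hupper⟩
    | succ i => simpa [consSampling] using h.step i (by omega)
  last_step _ := by
    cases m with
    | zero => simpa [consSampling, h.map_zero] using hupper
    | succ m => simpa [consSampling] using h.last_step (by omega)

end IsProperSampling

section Sampling

variable {X : Type*} [PseudoMetricSpace X] {r K : ℝ} {α : ℕ → X} {n : ℕ}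

theorem exists_next_sample (hr : 0 ≤ r) (hdisc : ∀ i < n, dist (α i) (α (i + 1)) ≤ K)
    (hn : 0 < n) :
    ∃ t, 0 < t ∧ t ≤ n ∧ dist (α 0) (α t) ≤ r + K ∧ (t < n → r ≤ dist (α 0) (α t)) := by
  classical
  have hex : ∃ j, 0 < j ∧ (j = n ∨ r ≤ dist (α 0) (α j)) := ⟨n, hn, .inl rfl⟩
  obtain ⟨ht, hfar⟩ := Nat.find_spec hex
  set t := Nat.find hex
  have htn : t ≤ n := Nat.find_min' hex ⟨hn, .inl rfl⟩
  have hnear : dist (α 0) (α (t - 1)) ≤ r := by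
    rcases Nat.lt_or_ge 1 t with h1 | h1
    · have := Nat.find_min hex (m := t - 1) (by omega)
      push Not at this
      exact (this (by omega)).2.le
    · simpa [show t - 1 = 0 by omega] using hr
  have hlast : dist (α (t - 1)) (α t) ≤ K := by
    simpa [Nat.sub_add_cancel ht] using hdisc (t - 1) (by omega)
  refine ⟨t, ht, htn, ?_, fun h => hfar.resolve_left h.ne⟩
  calc dist (α 0) (α t) ≤ dist (α 0) (α (t - 1)) + dist (α (t - 1)) (α t) := dist_triangle ..
    _ ≤ r + K := add_le_add hnear hlast

theorem exists_isProperSampling (hr : 0 ≤ r) (hdisc : ∀ i < n, dist (α i) (α (i + 1)) ≤ K) :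
    ∃ m ≤ n, ∃ σ, IsProperSampling r K α n m σ := by
  induction n using Nat.strong_induction_on generalizing α with
  | _ n ih =>
  rcases Nat.eq_zero_or_pos n with rfl | hn
  · exact ⟨0, le_rfl, id, .zero⟩
  obtain ⟨t, ht, htn, hupper, hlower⟩ := exists_next_sample hr hdisc hn
  obtain ⟨m, hm, σ, hσ⟩ := ih (n - t) (by omega) (α := fun i => α (t + i))
    (fun i hi => by simpa [Nat.add_assoc] using hdisc (t + i) (by omega))
  refine ⟨m + 1, by omega, consSampling t σ, hσ.cons ht htn hupper fun hm => hlower ?_⟩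
  have := hσ.pos_of_pos hm
  omega

end Sampling

theorem discrete_path_proper_sampling_general
    (X : Type) [MetricSpace X] (K r : ℝ) (hr : 0 ≤ r)
    (n : ℕ) (α : ℕ → X)
    (hdisc : ∀ i < n, dist (α i) (α (i + 1)) ≤ K) :
    ∃ m ≤ n, ∃ σ : ℕ → ℕ,
      σ 0 = 0 ∧ σ m = n ∧
      (∀ i j : ℕ, i < j → j ≤ m → σ i < σ j) ∧
      (∀ i : ℕ, i + 1 < m →
        r ≤ dist (α (σ i)) (α (σ (i + 1))) ∧
        dist (α (σ i)) (α (σ (i + 1))) ≤ r + K) ∧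
      (1 ≤ m → dist (α (σ (m - 1))) (α (σ m)) ≤ r + K) := by
  obtain ⟨m, hm, σ, h⟩ := exists_isProperSampling hr hdisc
  exact ⟨m, hm, σ, h.map_zero, h.map_last, h.map_lt_map, h.step, h.last_step⟩

/-- Sampling lemma: a `K`-discrete path can be made `(r,K)`-proper by passing to a
subsequence: consecutive sampled points are at distance in `[r, r+K]`, except possibly
the last step, which is at most `r + K`. -/
theorem discrete_path_proper_sampling
    (X : Type) [MetricSpace X] (x y : X) (K r : ℝ) (hK : 0 < K) (hr : 0 ≤ r)
    (n : ℕ) (α : ℕ → X) (h0 : α 0 = x) (hn : α n = y)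
    (hdisc : ∀ i < n, dist (α i) (α (i + 1)) ≤ K) :
    ∃ m ≤ n, ∃ σ : ℕ → ℕ,
      σ 0 = 0 ∧ σ m = n ∧
      (∀ i j : ℕ, i < j → j ≤ m → σ i < σ j) ∧
      (∀ i : ℕ, i + 1 < m →
        r ≤ dist (α (σ i)) (α (σ (i + 1))) ∧
        dist (α (σ i)) (α (σ (i + 1))) ≤ r + K) ∧
      (1 ≤ m → dist (α (σ (m - 1))) (α (σ m)) ≤ r + K) :=
  discrete_path_proper_sampling_general X K r hr n α hdisc
end

section
/- Let G be a graph and let ∼ be the relation on the vertex set defined as the transitive closure of a symmetric relation ∼_d. Suppose (S, ⊑) is a poset with the property (from Lemma 'no_cycle'): for vertices of a fixed poset S_v assigned to each vertex v of a tree, if U, U' ∈ S_v satisfy U ⊑ U' and U ∼ U', then U = U'. Then the relation on ∼-classes defined by [V] ⊑ [W] iff some vertex v carries representatives V_v ⊑ W_v is antisymmetric, provided that whenever V_v ∼ V_w and V_v ⊑ U_v with U_v ∼ U_w, there exists V'_w ∼ V_v with V'_w ⊑ U_w ('fullness propagates nesting along the tree'). -/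
/-!
Write `V ∼ V₁ ⊑ W₁ ∼ W ∼ W₂ ⊑ V₂ ∼ V`. Fullness transports `V₁ ⊑ W₁` along `W₁ ∼ W₂` to some
`V' ⊑ W₂` with `V' ∼ V₁`. Then `V' ⊑ W₂ ⊑ V₂` with `V' ∼ V₂`, so the no-cycle property collapses
this chain, giving `W₂ = V₂` and hence `V ∼ W`.
-/

theorem eq_of_le_of_le_of_rel {S : Type*} [PartialOrder S] {r : S → S → Prop}
    (hnocycle : ∀ a b : S, a ≤ b → r a b → a = b) {x y z : S}
    (hxy : x ≤ y) (hyz : y ≤ z) (hxz : r x z) : y = z :=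
  have hxz_eq : x = z := hnocycle x z (hxy.trans hyz) hxz
  hyz.antisymm (hxz_eq ▸ hxy)

theorem class_nesting_antisymmetric_general
    (S : Type) [PartialOrder S]
    (sim : S → S → Prop) (hequiv : Equivalence sim)
    (hnocycle : ∀ a b : S, a ≤ b → sim a b → a = b)
    (hfull : ∀ a a' c : S, sim a a' → c ≤ a → ∃ c' : S, sim c c' ∧ c' ≤ a') :
    ∀ a b : S,
      (∃ a₁ b₁ : S, sim a a₁ ∧ sim b b₁ ∧ a₁ ≤ b₁) →
      (∃ b₂ a₂ : S, sim b b₂ ∧ sim a a₂ ∧ b₂ ≤ a₂) →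
      sim a b := by
  rintro a b ⟨a₁, b₁, ha₁, hb₁, hab₁⟩ ⟨b₂, a₂, hb₂, ha₂, hba₂⟩
  obtain ⟨a', ha', ha'b₂⟩ := hfull b₁ b₂ a₁ (hequiv.trans (hequiv.symm hb₁) hb₂) hab₁
  have ha'a₂ : sim a' a₂ := hequiv.trans (hequiv.symm ha') (hequiv.trans (hequiv.symm ha₁) ha₂)
  have hb₂a₂ : b₂ = a₂ := eq_of_le_of_le_of_rel hnocycle ha'b₂ hba₂ ha'a₂
  exact hequiv.trans ha₂ (hequiv.symm (hb₂a₂ ▸ hb₂))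

/-- Antisymmetry of nesting of `∼`-classes in a tree of HHSs: domains form a poset `S`,
each domain sits at a vertex (`vert`), nesting only relates domains at a common vertex,
`∼` is an equivalence relation (the transitive closure of the symmetric relation
`∼_d`), the "no cycle" property says nested `∼`-equivalent domains are equal, and
fullness propagates nesting along `∼`.  Then the induced relation on `∼`-classes,
`[V] ⊑ [W]` iff some vertex carries representatives `V₁ ≤ W₁`, is antisymmetric. -/
theorem class_nesting_antisymmetric
    (S V : Type) [PartialOrder S] (vert : S → V)
    (sim : S → S → Prop) (hequiv : Equivalence sim)
    (hsame : ∀ a b : S, a ≤ b → vert a = vert b)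
    (hnocycle : ∀ a b : S, a ≤ b → sim a b → a = b)
    (hfull : ∀ a a' c : S, sim a a' → c ≤ a → ∃ c' : S, sim c c' ∧ c' ≤ a') :
    ∀ a b : S,
      (∃ a₁ b₁ : S, sim a a₁ ∧ sim b b₁ ∧ a₁ ≤ b₁) →
      (∃ b₂ a₂ : S, sim b b₂ ∧ sim a a₂ ∧ b₂ ≤ a₂) →
      sim a b :=
  class_nesting_antisymmetric_general S sim hequiv hnocycle hfull
end
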